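/- arXiv:1503.08713 — 3 statements merged into one kernel-verified Lean document; each statement's English description precedes it below -/
import Mathlib

section
/- Let γ¹, γ² : [0,1] × [0,T) → ℝ² be smooth regular curves evolving by γ^i_t = γ^i_xx/|γ^i_x|², satisfying for every t the concurrency condition γ¹(0,t) = γ¹(1,t) = γ²(0,t) and the 120-degree condition τ¹(0,t) − τ¹(1,t) + τ²(0,t) = 0. Then for every t ∈ [0,T): ∂_s k¹(0,t) + λ¹(0,t) k¹(0,t) = ∂_s k¹(1,t) + λ¹(1,t) k¹(1,t) = ∂_s k²(0,t) + λ²(0,t) k²(0,t), where λ^i = ⟨γ^i_t, τ^i⟩ and k^i = ⟨γ^i_t, ν^i⟩. -/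
noncomputable section
open scoped RealInnerProductSpace
open MeasureTheory Filter Set

/-- The Euclidean plane. -/
abbrev E2 : Type := EuclideanSpace ℝ (Fin 2)

/-- Counterclockwise rotation of the plane by π/2. -/
def rot (v : E2) : E2 := (WithLp.equiv 2 (Fin 2 → ℝ)).symm ![-(v 1), v 0]

/-- Unit tangent vector `τ = γ_x/|γ_x|` of a curve `γ`. -/
def tangent (γ : ℝ → E2) (x : ℝ) : E2 := ‖deriv γ x‖⁻¹ • deriv γ x

/-- Unit normal vector `ν = R τ` of a curve `γ`. -/
def normal (γ : ℝ → E2) (x : ℝ) : E2 := rot (tangent γ x)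

/-- Curvature `k = ⟨γ_xx, ν⟩/|γ_x|²` of a curve `γ`. -/
def curvature (γ : ℝ → E2) (x : ℝ) : ℝ :=
  ⟪deriv (deriv γ) x, normal γ x⟫ / ‖deriv γ x‖ ^ 2

/-- Arclength derivative `∂_s f = f_x/|γ_x|` of a function `f` along a curve `γ`. -/
def arcDeriv (γ : ℝ → E2) (f : ℝ → ℝ) (x : ℝ) : ℝ := deriv f x / ‖deriv γ x‖

lemma rot_apply0 (v : E2) : rot v 0 = -(v 1) := rfl
lemma rot_apply1 (v : E2) : rot v 1 = v 0 := rfl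

lemma inner_E2 (x y : E2) : ⟪x, y⟫ = x 0 * y 0 + x 1 * y 1 := by
  simp [PiLp.inner_apply, Fin.sum_univ_two, RCLike.inner_apply, mul_comm]

lemma rot_rot (v : E2) : rot (rot v) = -v := by
  ext i; fin_cases i <;> simp [rot_apply0, rot_apply1, Fin.mk_zero, Fin.mk_one]

def rotL : E2 →L[ℝ] E2 :=
  LinearMap.toContinuousLinearMap
    { toFun := rot
      map_add' := by
        intro a b; ext i; fin_cases i <;>
          simp [rot_apply0, rot_apply1, Fin.mk_zero, Fin.mk_one] <;> ring
      map_smul' := by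
        intro c a; ext i; fin_cases i <;>
          simp [rot_apply0, rot_apply1, mul_neg, Fin.mk_zero, Fin.mk_one] }

lemma rotL_apply (v : E2) : rotL v = rot v := rfl

lemma rot_smul (c : ℝ) (v : E2) : rot (c • v) = c • rot v := by
  rw [← rotL_apply, ← rotL_apply]; exact map_smul rotL c v

lemma rot_zero : rot (0 : E2) = 0 := by
  rw [← rotL_apply]; exact map_zero rotL

lemma rot_eq_zero {v : E2} (h : rot v = 0) : v = 0 := by
  have := congrArg rot h
  rw [rot_rot, rot_zero] at this
  simpa [neg_eq_zero] using this

/-- orthonormal decomposition in the plane -/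
lemma decomp (τ w : E2) (h : ‖τ‖ = 1) :
    w = ⟪w, τ⟫ • τ + ⟪w, rot τ⟫ • rot τ := by
  have h2 : τ 0 * τ 0 + τ 1 * τ 1 = 1 := by
    have h3 := real_inner_self_eq_norm_sq τ
    rw [h, inner_E2] at h3
    simpa using h3
  ext i
  fin_cases i
  · simp only [PiLp.add_apply, PiLp.smul_apply, smul_eq_mul, inner_E2,
      rot_apply0, rot_apply1, Fin.mk_zero, Fin.mk_one]
    linear_combination -w 0 * h2
  · simp only [PiLp.add_apply, PiLp.smul_apply, smul_eq_mul, inner_E2,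
      rot_apply0, rot_apply1, Fin.mk_zero, Fin.mk_one]
    linear_combination -w 1 * h2

lemma inner_rot_self (a : E2) : ⟪a, rot a⟫ = 0 := by
  simp [inner_E2, rot_apply0, rot_apply1]; ring
lemma inner_rot_self' (a : E2) : ⟪rot a, a⟫ = 0 := by
  simp [inner_E2, rot_apply0, rot_apply1]; ring
lemma norm_rot (a : E2) : ‖rot a‖ = ‖a‖ := by
  have h1 : ⟪rot a, rot a⟫ = ⟪a, a⟫ := by simp only [inner_E2, rot_apply0, rot_apply1]; ring
  rw [real_inner_self_eq_norm_sq, real_inner_self_eq_norm_sq] at h1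
  calc ‖rot a‖ = Real.sqrt (‖rot a‖ ^ 2) := (Real.sqrt_sq (norm_nonneg _)).symm
    _ = Real.sqrt (‖a‖ ^ 2) := by rw [h1]
    _ = ‖a‖ := Real.sqrt_sq (norm_nonneg _)

lemma hasDerivAt_norm' {u : ℝ → E2} {u' : E2} {t : ℝ} (h : HasDerivAt u u' t)
    (h0 : u t ≠ 0) : HasDerivAt (fun s => ‖u s‖) (⟪u t, u'⟫ / ‖u t‖) t := by
  have h1 : HasDerivAt (fun s => (⟪u s, u s⟫ : ℝ)) (2 * ⟪u t, u'⟫) t := by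
    have h1' := h.inner ℝ h
    refine h1'.congr_deriv ?_
    rw [real_inner_comm u' (u t)]
    ring
  have hx : (0:ℝ) < ⟪u t, u t⟫ := by
    rw [real_inner_self_eq_norm_sq]
    have hne : ‖u t‖ ≠ 0 := norm_ne_zero_iff.mpr h0
    positivity
  have h2 := (Real.hasDerivAt_sqrt (ne_of_gt hx)).comp t h1
  have h3 : ∀ s, Real.sqrt ⟪u s, u s⟫ = ‖u s‖ := fun s => by
    rw [real_inner_self_eq_norm_sq]; exact Real.sqrt_sq (norm_nonneg _)
  have h4 : HasDerivAt (fun s => ‖u s‖)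
      (1 / (2 * Real.sqrt ⟪u t, u t⟫) * (2 * ⟪u t, u'⟫)) t := by
    have hfe : (Real.sqrt ∘ fun s => (⟪u s, u s⟫ : ℝ)) = fun s => ‖u s‖ :=
      funext fun s => h3 s
    rw [← hfe]; exact h2
  convert h4 using 1
  rw [h3 t]
  have hn : ‖u t‖ ≠ 0 := norm_ne_zero_iff.mpr h0
  field_simp

lemma hasDerivAt_unitTangent {u : ℝ → E2} {u' : E2} {t : ℝ} (h : HasDerivAt u u' t)
    (h0 : u t ≠ 0) :
    HasDerivAt (fun s => ‖u s‖⁻¹ • u s)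
      ((‖u t‖⁻¹ * ⟪u', rot (‖u t‖⁻¹ • u t)⟫) • rot (‖u t‖⁻¹ • u t)) t := by
  have hn : ‖u t‖ ≠ 0 := norm_ne_zero_iff.mpr h0
  have hInv := (hasDerivAt_norm' h h0).inv hn
  have hs := hInv.smul h
  simp only [Pi.inv_apply] at hs
  refine (hs.congr_deriv ?_)
  symm
  set n : ℝ := ‖u t‖ with hn'
  set τ : E2 := n⁻¹ • u t with hτ'
  have hτ : ‖τ‖ = 1 := by
    rw [hτ', norm_smul, norm_inv, norm_norm, ← hn', inv_mul_cancel₀ hn]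
  have hut : u t = n • τ := by
    rw [hτ', smul_smul, mul_inv_cancel₀ hn, one_smul]
  have hdec := decomp τ u' hτ
  rw [hdec, hut]
  simp only [inner_add_right, inner_add_left, inner_smul_right, inner_smul_left,
    real_inner_self_eq_norm_sq, hτ, inner_rot_self, inner_rot_self', norm_rot,
    conj_trivial]
  match_scalars <;> field_simp <;> ring


lemma norm_tangent {γ : ℝ → E2} {x : ℝ} (h : deriv γ x ≠ 0) : ‖tangent γ x‖ = 1 := by
  rw [tangent, norm_smul, norm_inv, norm_norm, inv_mul_cancel₀ (norm_ne_zero_iff.mpr h)]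

/-- Key lemma: time derivative of the unit tangent for the special flow. -/
lemma key (γ : ℝ → ℝ → E2) (hγ : ContDiff ℝ (⊤ : ℕ∞) fun p : ℝ × ℝ => γ p.1 p.2)
    (x₀ t₀ : ℝ) (hv0 : deriv (fun y => γ y t₀) x₀ ≠ 0)
    (hm : deriv (fun s => γ x₀ s) t₀
        = (‖deriv (fun y => γ y t₀) x₀‖ ^ 2)⁻¹ • deriv (deriv (fun y => γ y t₀)) x₀)
    (k lam : ℝ → ℝ → ℝ)
    (hk : ∀ x t, k x t = ⟪deriv (fun s => γ x s) t, normal (fun y => γ y t) x⟫)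
    (hlam : lam x₀ t₀ = ⟪deriv (fun s => γ x₀ s) t₀, tangent (fun y => γ y t₀) x₀⟫) :
    HasDerivAt (fun t => tangent (fun y => γ y t) x₀)
      ((arcDeriv (fun y => γ y t₀) (fun y => k y t₀) x₀ + lam x₀ t₀ * k x₀ t₀)
        • normal (fun y => γ y t₀) x₀) t₀ := by
  set G : ℝ × ℝ → E2 := fun p => γ p.1 p.2 with hG
  have hdiffG : Differentiable ℝ G := hγ.differentiable (by simp)
  -- partial derivative in x
  have hx_line : ∀ t x, HasDerivAt (fun y => γ y t) (fderiv ℝ G (x, t) (1, 0)) x := by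
    intro t x
    have h1 : HasDerivAt (fun y : ℝ => (y, t)) ((1 : ℝ), (0 : ℝ)) x :=
      (hasDerivAt_id x).prodMk (hasDerivAt_const x t)
    exact (hdiffG (x, t)).hasFDerivAt.comp_hasDerivAt x h1
  have ht_line : ∀ x t, HasDerivAt (fun s => γ x s) (fderiv ℝ G (x, t) (0, 1)) t := by
    intro x t
    have h1 : HasDerivAt (fun s : ℝ => (x, s)) ((0 : ℝ), (1 : ℝ)) t :=
      (hasDerivAt_const t x).prodMk (hasDerivAt_id t)
    exact (hdiffG (x, t)).hasFDerivAt.comp_hasDerivAt t h1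
  set V : ℝ × ℝ → E2 := fun p => fderiv ℝ G p (1, 0) with hVdef
  set W : ℝ × ℝ → E2 := fun p => fderiv ℝ G p (0, 1) with hWdef
  have hV : ∀ t x, deriv (fun y => γ y t) x = V (x, t) := fun t x => (hx_line t x).deriv
  have hW : ∀ x t, deriv (fun s => γ x s) t = W (x, t) := fun x t => (ht_line x t).deriv
  have hfd : ContDiff ℝ (⊤ : ℕ∞) (fderiv ℝ G) := hγ.fderiv_right (by simp)
  have hfdd : Differentiable ℝ (fderiv ℝ G) := hfd.differentiable (by simp)
  -- derivative of V in t, of W in x, of V in x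
  have hderivFD : ∀ (c : ℝ × ℝ) (p : ℝ × ℝ) (q : ℝ × ℝ),
      HasDerivAt (fun s : ℝ => fderiv ℝ G (p + s • q) c)
        (fderiv ℝ (fderiv ℝ G) (p + (0:ℝ) • q) q c) 0 := by
    intro c p q
    have h1 : HasDerivAt (fun s : ℝ => p + s • q) q 0 := by
      simpa using ((hasDerivAt_id (0:ℝ)).smul_const q).const_add p
    have h2 := (hfdd (p + (0:ℝ) • q)).hasFDerivAt.comp_hasDerivAt 0 h1
    exact ((ContinuousLinearMap.apply ℝ E2 c).hasFDerivAt).comp_hasDerivAt 0 h2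
  -- specialized versions at (x₀, t₀)
  have hVt : HasDerivAt (fun t => V (x₀, t)) (fderiv ℝ (fderiv ℝ G) (x₀, t₀) (0, 1) (1, 0)) t₀ := by
    have h1 : HasDerivAt (fun t : ℝ => fderiv ℝ G (x₀, t)) (fderiv ℝ (fderiv ℝ G) (x₀, t₀) (0, 1)) t₀ := by
      have hline : HasDerivAt (fun t : ℝ => ((x₀, t) : ℝ × ℝ)) ((0 : ℝ), (1 : ℝ)) t₀ :=
        (hasDerivAt_const t₀ x₀).prodMk (hasDerivAt_id t₀)
      exact (hfdd (x₀, t₀)).hasFDerivAt.comp_hasDerivAt t₀ hline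
    exact ((ContinuousLinearMap.apply ℝ E2 ((1:ℝ), (0:ℝ))).hasFDerivAt).comp_hasDerivAt t₀ h1
  have hWx : HasDerivAt (fun x => W (x, t₀)) (fderiv ℝ (fderiv ℝ G) (x₀, t₀) (1, 0) (0, 1)) x₀ := by
    have h1 : HasDerivAt (fun x : ℝ => fderiv ℝ G (x, t₀)) (fderiv ℝ (fderiv ℝ G) (x₀, t₀) (1, 0)) x₀ := by
      have hline : HasDerivAt (fun x : ℝ => ((x, t₀) : ℝ × ℝ)) ((1 : ℝ), (0 : ℝ)) x₀ :=
        (hasDerivAt_id x₀).prodMk (hasDerivAt_const x₀ t₀)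
      exact (hfdd (x₀, t₀)).hasFDerivAt.comp_hasDerivAt x₀ hline
    exact ((ContinuousLinearMap.apply ℝ E2 ((0:ℝ), (1:ℝ))).hasFDerivAt).comp_hasDerivAt x₀ h1
  have hVx : HasDerivAt (fun x => V (x, t₀)) (fderiv ℝ (fderiv ℝ G) (x₀, t₀) (1, 0) (1, 0)) x₀ := by
    have h1 : HasDerivAt (fun x : ℝ => fderiv ℝ G (x, t₀)) (fderiv ℝ (fderiv ℝ G) (x₀, t₀) (1, 0)) x₀ := by
      have hline : HasDerivAt (fun x : ℝ => ((x, t₀) : ℝ × ℝ)) ((1 : ℝ), (0 : ℝ)) x₀ :=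
        (hasDerivAt_id x₀).prodMk (hasDerivAt_const x₀ t₀)
      exact (hfdd (x₀, t₀)).hasFDerivAt.comp_hasDerivAt x₀ hline
    exact ((ContinuousLinearMap.apply ℝ E2 ((1:ℝ), (0:ℝ))).hasFDerivAt).comp_hasDerivAt x₀ h1
  -- Clairaut
  have hsymm : fderiv ℝ (fderiv ℝ G) (x₀, t₀) (0, 1) (1, 0)
      = fderiv ℝ (fderiv ℝ G) (x₀, t₀) (1, 0) (0, 1) :=
    (hγ.contDiffAt.isSymmSndFDerivAt (by rw [minSmoothness_of_isRCLikeNormedField]; exact WithTop.coe_le_coe.mpr le_top)) _ _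
  set M : E2 := fderiv ℝ (fderiv ℝ G) (x₀, t₀) (1, 0) (0, 1) with hM
  rw [hsymm] at hVt
  set B : E2 := fderiv ℝ (fderiv ℝ G) (x₀, t₀) (1, 0) (1, 0) with hB
  have hv0' : V (x₀, t₀) ≠ 0 := by rw [← hV t₀ x₀]; exact hv0
  set n₀ : ℝ := ‖V (x₀, t₀)‖ with hn₀
  have hn0 : n₀ ≠ 0 := norm_ne_zero_iff.mpr hv0'
  set τ₀ : E2 := n₀⁻¹ • V (x₀, t₀) with hτ₀
  set ν₀ : E2 := rot τ₀ with hν₀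
  have htan : ∀ t x, tangent (fun y => γ y t) x = ‖V (x, t)‖⁻¹ • V (x, t) := by
    intro t x; rw [tangent, hV]
  have hnor : ∀ t x, normal (fun y => γ y t) x = rot (‖V (x, t)‖⁻¹ • V (x, t)) := by
    intro t x; rw [normal, htan]
  -- time derivative of the tangent
  have hT : HasDerivAt (fun t => tangent (fun y => γ y t) x₀)
      ((n₀⁻¹ * ⟪M, ν₀⟫) • ν₀) t₀ := by
    have h1 := hasDerivAt_unitTangent hVt hv0'
    have heq : (fun t => tangent (fun y => γ y t) x₀)
        = fun t => ‖V (x₀, t)‖⁻¹ • V (x₀, t) := funext fun t => htan t x₀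
    rw [heq]
    exact h1
  -- x-derivative of the tangent and normal
  have hτx : HasDerivAt (fun x => ‖V (x, t₀)‖⁻¹ • V (x, t₀)) ((n₀⁻¹ * ⟪B, ν₀⟫) • ν₀) x₀ :=
    hasDerivAt_unitTangent hVx hv0'
  set c : ℝ := n₀⁻¹ * ⟪B, ν₀⟫ with hc
  have hνx : HasDerivAt (fun x => rot (‖V (x, t₀)‖⁻¹ • V (x, t₀))) ((-c) • τ₀) x₀ := by
    have h2 := rotL.hasFDerivAt.comp_hasDerivAt x₀ hτx
    have h4 : HasDerivAt (fun x => rot (‖V (x, t₀)‖⁻¹ • V (x, t₀))) (rotL (c • ν₀)) x₀ := by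
      have h3 : (⇑rotL ∘ fun x => ‖V (x, t₀)‖⁻¹ • V (x, t₀))
          = fun x => rot (‖V (x, t₀)‖⁻¹ • V (x, t₀)) := funext fun x => rotL_apply _
      rw [← h3]
      exact h2
    convert h4 using 1
    rw [rotL_apply, rot_smul, hν₀, rot_rot]
    rw [smul_neg, neg_smul]
  -- derivative of k(·, t₀)
  have hkfun : (fun x => k x t₀) = fun x => ⟪W (x, t₀), rot (‖V (x, t₀)‖⁻¹ • V (x, t₀))⟫ := by
    funext x; rw [hk, hW, hnor]
  have hkd : HasDerivAt (fun x => k x t₀) (⟪W (x₀, t₀), (-c) • τ₀⟫ + ⟪M, ν₀⟫) x₀ := by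
    rw [hkfun]
    exact hWx.inner ℝ hνx
  -- identify quantities
  have hvfun : deriv (fun y => γ y t₀) = fun x => V (x, t₀) := funext fun x => hV t₀ x
  have hw0 : W (x₀, t₀) = ((n₀ : ℝ) ^ 2)⁻¹ • B := by
    rw [← hW, hm]
    congr 1
    · rw [hV t₀ x₀]
    · rw [hvfun]; exact hVx.deriv
  have hlam' : lam x₀ t₀ = ⟪W (x₀, t₀), τ₀⟫ := by rw [hlam, hW, htan]
  have hkval : k x₀ t₀ = ((n₀ : ℝ) ^ 2)⁻¹ * ⟪B, ν₀⟫ := by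
    rw [hk, hW, hnor, hw0, real_inner_smul_left]
  have harc : arcDeriv (fun y => γ y t₀) (fun y => k y t₀) x₀
      = (-c * ⟪W (x₀, t₀), τ₀⟫ + ⟪M, ν₀⟫) / n₀ := by
    rw [arcDeriv, hkd.deriv, hvfun]
    congr 2
    rw [real_inner_smul_right]
  have hcoef : arcDeriv (fun y => γ y t₀) (fun y => k y t₀) x₀ + lam x₀ t₀ * k x₀ t₀
      = n₀⁻¹ * ⟪M, ν₀⟫ := by
    rw [harc, hlam', hkval, hc]
    field_simp
    ring
  rw [hcoef, hnor t₀ x₀]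
  exact hT

set_option maxHeartbeats 1000000 in
/-- three unit vectors at 120 degrees: scalar combination rigidity -/
lemma triple_rigid (u₁ u₂ u₃ : E2) (h1 : ‖u₁‖ = 1) (h2 : ‖u₂‖ = 1) (h3 : ‖u₃‖ = 1)
    (hsum : u₁ - u₂ + u₃ = 0) (a₁ a₂ a₃ : ℝ)
    (hlin : a₁ • u₁ - a₂ • u₂ + a₃ • u₃ = 0) : a₁ = a₂ ∧ a₂ = a₃ := by
  have c1 : u₁ 0 * u₁ 0 + u₁ 1 * u₁ 1 = 1 := by
    have h := real_inner_self_eq_norm_sq u₁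
    rw [h1, inner_E2] at h; norm_num at h; linarith
  have c2 : u₂ 0 * u₂ 0 + u₂ 1 * u₂ 1 = 1 := by
    have h := real_inner_self_eq_norm_sq u₂
    rw [h2, inner_E2] at h; norm_num at h; linarith
  have c3 : u₃ 0 * u₃ 0 + u₃ 1 * u₃ 1 = 1 := by
    have h := real_inner_self_eq_norm_sq u₃
    rw [h3, inner_E2] at h; norm_num at h; linarith
  have s0 : u₁ 0 - u₂ 0 + u₃ 0 = 0 := by
    have := congrArg (fun w : E2 => w 0) hsum
    simpa using this
  have s1 : u₁ 1 - u₂ 1 + u₃ 1 = 0 := by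
    have := congrArg (fun w : E2 => w 1) hsum
    simpa using this
  have l0 : a₁ * u₁ 0 - a₂ * u₂ 0 + a₃ * u₃ 0 = 0 := by
    have := congrArg (fun w : E2 => w 0) hlin
    simpa using this
  have l1 : a₁ * u₁ 1 - a₂ * u₂ 1 + a₃ * u₃ 1 = 0 := by
    have := congrArg (fun w : E2 => w 1) hlin
    simpa using this
  have hu30 : u₃ 0 = u₂ 0 - u₁ 0 := by linarith
  have hu31 : u₃ 1 = u₂ 1 - u₁ 1 := by linarith
  have hp : u₁ 0 * u₂ 0 + u₁ 1 * u₂ 1 = 1 / 2 := by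
    rw [hu30, hu31] at c3; nlinarith [c1, c2, c3]
  have e0 : (a₁ - a₃) * u₁ 0 - (a₂ - a₃) * u₂ 0 = 0 := by
    linear_combination l0 - a₃ * s0
  have e1 : (a₁ - a₃) * u₁ 1 - (a₂ - a₃) * u₂ 1 = 0 := by
    linear_combination l1 - a₃ * s1
  have q1 : (a₁ - a₃) ^ 2 = (a₁ - a₃) * (a₂ - a₃) * (1 / 2) := by
    linear_combination (-((a₁ - a₃) ^ 2)) * c1 + ((a₁ - a₃) * u₁ 0) * e0
      + ((a₁ - a₃) * u₁ 1) * e1 + ((a₁ - a₃) * (a₂ - a₃)) * hp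
  have q2 : (a₂ - a₃) ^ 2 = (a₁ - a₃) * (a₂ - a₃) * (1 / 2) := by
    linear_combination (-((a₂ - a₃) ^ 2)) * c2 + (-((a₂ - a₃) * u₂ 0)) * e0
      + (-((a₂ - a₃) * u₂ 1)) * e1 + ((a₁ - a₃) * (a₂ - a₃)) * hp
  have hb1 : a₁ - a₃ = 0 := by
    have h0 : (a₁ - a₃) ^ 2 = 0 := le_antisymm
      (by nlinarith [q1, q2, sq_nonneg (a₁ - a₃ - (a₂ - a₃)), sq_nonneg (a₂ - a₃)])
      (sq_nonneg _)
    exact sq_eq_zero_iff.mp h0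
  have hb2 : a₂ - a₃ = 0 := by
    have h0 : (a₂ - a₃) ^ 2 = 0 := by
      linear_combination q2 + ((a₂ - a₃) * (1 / 2)) * hb1
    exact sq_eq_zero_iff.mp h0
  constructor
  · linarith
  · linarith

/-- at a 120-degree junction of two curves evolving by
`γ^i_t = γ^i_xx/|γ^i_x|²`, the quantities `∂_s k + λ k` computed from the three
concurring curve ends all agree. -/
theorem third_order_condition (T : ℝ) (γ₁ γ₂ : ℝ → ℝ → E2)
    (hγ₁ : ContDiff ℝ (⊤ : ℕ∞) fun p : ℝ × ℝ => γ₁ p.1 p.2)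
    (hγ₂ : ContDiff ℝ (⊤ : ℕ∞) fun p : ℝ × ℝ => γ₂ p.1 p.2)
    (hreg₁ : ∀ x ∈ Set.Icc (0:ℝ) 1, ∀ t ∈ Set.Ico (0:ℝ) T,
      deriv (fun y => γ₁ y t) x ≠ 0)
    (hreg₂ : ∀ x ∈ Set.Icc (0:ℝ) 1, ∀ t ∈ Set.Ico (0:ℝ) T,
      deriv (fun y => γ₂ y t) x ≠ 0)
    (hconc : ∀ t ∈ Set.Ico (0:ℝ) T, γ₁ 0 t = γ₁ 1 t ∧ γ₁ 0 t = γ₂ 0 t)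
    (hangle : ∀ t ∈ Set.Ico (0:ℝ) T,
      tangent (fun y => γ₁ y t) 0 - tangent (fun y => γ₁ y t) 1
        + tangent (fun y => γ₂ y t) 0 = 0)
    (hmotion₁ : ∀ x ∈ Set.Icc (0:ℝ) 1, ∀ t ∈ Set.Ico (0:ℝ) T,
      deriv (fun s => γ₁ x s) t
        = (‖deriv (fun y => γ₁ y t) x‖ ^ 2)⁻¹ • deriv (deriv (fun y => γ₁ y t)) x)
    (hmotion₂ : ∀ x ∈ Set.Icc (0:ℝ) 1, ∀ t ∈ Set.Ico (0:ℝ) T,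
      deriv (fun s => γ₂ x s) t
        = (‖deriv (fun y => γ₂ y t) x‖ ^ 2)⁻¹ • deriv (deriv (fun y => γ₂ y t)) x)
    (lam₁ lam₂ k₁ k₂ : ℝ → ℝ → ℝ)
    (hlam₁ : ∀ x t, lam₁ x t = ⟪deriv (fun s => γ₁ x s) t, tangent (fun y => γ₁ y t) x⟫)
    (hlam₂ : ∀ x t, lam₂ x t = ⟪deriv (fun s => γ₂ x s) t, tangent (fun y => γ₂ y t) x⟫)
    (hk₁ : ∀ x t, k₁ x t = ⟪deriv (fun s => γ₁ x s) t, normal (fun y => γ₁ y t) x⟫)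
    (hk₂ : ∀ x t, k₂ x t = ⟪deriv (fun s => γ₂ x s) t, normal (fun y => γ₂ y t) x⟫) :
    ∀ t ∈ Set.Ico (0:ℝ) T,
      (arcDeriv (fun y => γ₁ y t) (fun y => k₁ y t) 0 + lam₁ 0 t * k₁ 0 t
        = arcDeriv (fun y => γ₁ y t) (fun y => k₁ y t) 1 + lam₁ 1 t * k₁ 1 t)
      ∧ (arcDeriv (fun y => γ₁ y t) (fun y => k₁ y t) 1 + lam₁ 1 t * k₁ 1 t
        = arcDeriv (fun y => γ₂ y t) (fun y => k₂ y t) 0 + lam₂ 0 t * k₂ 0 t) := by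
  intro t₀ ht₀
  have h01 : (0:ℝ) ∈ Set.Icc (0:ℝ) 1 := by constructor <;> norm_num
  have h11 : (1:ℝ) ∈ Set.Icc (0:ℝ) 1 := by constructor <;> norm_num
  have d₁ := key γ₁ hγ₁ 0 t₀ (hreg₁ 0 h01 t₀ ht₀) (hmotion₁ 0 h01 t₀ ht₀)
    k₁ lam₁ hk₁ (hlam₁ 0 t₀)
  have d₂ := key γ₁ hγ₁ 1 t₀ (hreg₁ 1 h11 t₀ ht₀) (hmotion₁ 1 h11 t₀ ht₀)
    k₁ lam₁ hk₁ (hlam₁ 1 t₀)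
  have d₃ := key γ₂ hγ₂ 0 t₀ (hreg₂ 0 h01 t₀ ht₀) (hmotion₂ 0 h01 t₀ ht₀)
    k₂ lam₂ hk₂ (hlam₂ 0 t₀)
  set a₁ : ℝ := arcDeriv (fun y => γ₁ y t₀) (fun y => k₁ y t₀) 0 + lam₁ 0 t₀ * k₁ 0 t₀ with ha₁
  set a₂ : ℝ := arcDeriv (fun y => γ₁ y t₀) (fun y => k₁ y t₀) 1 + lam₁ 1 t₀ * k₁ 1 t₀ with ha₂
  set a₃ : ℝ := arcDeriv (fun y => γ₂ y t₀) (fun y => k₂ y t₀) 0 + lam₂ 0 t₀ * k₂ 0 t₀ with ha₃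
  set u₁ : E2 := tangent (fun y => γ₁ y t₀) 0 with hu₁
  set u₂ : E2 := tangent (fun y => γ₁ y t₀) 1 with hu₂
  set u₃ : E2 := tangent (fun y => γ₂ y t₀) 0 with hu₃
  have dF : HasDerivAt (fun t => tangent (fun y => γ₁ y t) 0 - tangent (fun y => γ₁ y t) 1
      + tangent (fun y => γ₂ y t) 0)
      (a₁ • rot u₁ - a₂ • rot u₂ + a₃ • rot u₃) t₀ := by
    exact (d₁.sub d₂).add d₃
  have hzero : a₁ • rot u₁ - a₂ • rot u₂ + a₃ • rot u₃ = 0 := by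
    have hud : UniqueDiffWithinAt ℝ (Set.Ico (0:ℝ) T) t₀ := uniqueDiffOn_Ico 0 T t₀ ht₀
    have hw1 := dF.hasDerivWithinAt (s := Set.Ico (0:ℝ) T)
    have hw2 : HasDerivWithinAt (fun t => tangent (fun y => γ₁ y t) 0
        - tangent (fun y => γ₁ y t) 1 + tangent (fun y => γ₂ y t) 0)
        0 (Set.Ico (0:ℝ) T) t₀ := by
      refine (hasDerivWithinAt_const t₀ _ (0:E2)).congr ?_ ?_
      · intro y hy; exact hangle y hy
      · exact hangle t₀ ht₀
    exact UniqueDiffWithinAt.eq_deriv _ hud hw1 hw2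
  have hsum : u₁ - u₂ + u₃ = 0 := hangle t₀ ht₀
  have hlin : a₁ • u₁ - a₂ • u₂ + a₃ • u₃ = 0 := by
    apply rot_eq_zero
    rw [← rotL_apply, map_add, map_sub, _root_.map_smul, _root_.map_smul, _root_.map_smul,
      rotL_apply, rotL_apply, rotL_apply]
    exact hzero
  have n1 : ‖u₁‖ = 1 := norm_tangent (hreg₁ 0 h01 t₀ ht₀)
  have n2 : ‖u₂‖ = 1 := norm_tangent (hreg₁ 1 h11 t₀ ht₀)
  have n3 : ‖u₃‖ = 1 := norm_tangent (hreg₂ 0 h01 t₀ ht₀)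
  have := triple_rigid u₁ u₂ u₃ n1 n2 n3 hsum a₁ a₂ a₃ hlin
  exact ⟨this.1, this.2⟩
end
end

section
/- Let γ¹ : [0,1] × [0,T) → ℝ² be a smooth regular closed curve (γ¹(0,t) = γ¹(1,t)) evolving by γ¹_t = γ¹_xx/|γ¹_x|², with total curvature ∫₀¹ k¹ |γ¹_x| dx = 5π/3 for every t ∈ [0,T), and let A(t) = ½ ∫₀¹ det(γ¹(x,t), γ¹_x(x,t)) dx be the enclosed area. If A(t) > 0 for every t ∈ [0,T), then T ≤ 3A(0)/(5π). -/
noncomputable section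
open scoped RealInnerProductSpace
open MeasureTheory Filter Set

/-- The 2×2 determinant `det(a,b) = a₁b₂ − a₂b₁` of two plane vectors. -/
def det2 (a b : E2) : ℝ := a 0 * b 1 - a 1 * b 0

/-! ### Auxiliary lemmas -/

lemma det2_swap (a b : E2) : det2 a b = -det2 b a := by simp [det2]; ring

lemma det2_smul_left (c : ℝ) (a b : E2) : det2 (c • a) b = c * det2 a b := by
  simp [det2, PiLp.smul_apply, smul_eq_mul]; ring

lemma continuous_det2 {α : Type*} [TopologicalSpace α] {f g : α → E2}
    (hf : Continuous f) (hg : Continuous g) :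
    Continuous fun p => det2 (f p) (g p) := by
  have c0 : ∀ (h : α → E2), Continuous h → ∀ i, Continuous fun p => h p i :=
    fun h hh i => ((EuclideanSpace.proj i).continuous.comp hh)
  exact ((c0 f hf 0).mul (c0 g hg 1)).sub ((c0 f hf 1).mul (c0 g hg 0))

lemma det2_hasDerivAt {u v : ℝ → E2} {u' v' : E2} {t : ℝ}
    (hu : HasDerivAt u u' t) (hv : HasDerivAt v v' t) :
    HasDerivAt (fun s => det2 (u s) (v s)) (det2 u' (v t) + det2 (u t) v') t := by
  have pj : ∀ (w : ℝ → E2) (w' : E2), HasDerivAt w w' t → ∀ i : Fin 2,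
      HasDerivAt (fun s => w s i) (w' i) t := fun w w' hw i => by
    exact
      (EuclideanSpace.proj i).hasFDerivAt.comp_hasDerivAt t hw
  have := ((pj u u' hu 0).mul (pj v v' hv 1)).sub ((pj u u' hu 1).mul (pj v v' hv 0))
  convert this using 1
  · rfl
  · rfl
  · funext s; simp [det2]
  · simp [det2]; ring

lemma keyx {F : ℝ × ℝ → E2} (hF : ContDiff ℝ (⊤ : ℕ∞) F) (x t : ℝ) :
    HasDerivAt (fun y => F (y, t)) (fderiv ℝ F (x, t) (1, 0)) x := by
  have h1 : HasDerivAt (fun y : ℝ => ((y, t) : ℝ × ℝ)) ((1 : ℝ), (0 : ℝ)) x :=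
    (hasDerivAt_id x).prodMk (hasDerivAt_const x t)
  exact (hF.differentiable (by simp) (x, t)).hasFDerivAt.comp_hasDerivAt x h1

lemma keyt {F : ℝ × ℝ → E2} (hF : ContDiff ℝ (⊤ : ℕ∞) F) (x t : ℝ) :
    HasDerivAt (fun s => F (x, s)) (fderiv ℝ F (x, t) (0, 1)) t := by
  have h1 : HasDerivAt (fun s : ℝ => ((x, s) : ℝ × ℝ)) ((0 : ℝ), (1 : ℝ)) t :=
    (hasDerivAt_const t x).prodMk (hasDerivAt_id t)
  exact (hF.differentiable (by simp) (x, t)).hasFDerivAt.comp_hasDerivAt t h1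

lemma partial_contDiff {F : ℝ × ℝ → E2} (hF : ContDiff ℝ (⊤ : ℕ∞) F) (v : ℝ × ℝ) :
    ContDiff ℝ (⊤ : ℕ∞) (fun p => fderiv ℝ F p v) :=
  (hF.fderiv_right (by simp)).clm_apply contDiff_const

lemma mixed_symm {F : ℝ × ℝ → E2} (hF : ContDiff ℝ (⊤ : ℕ∞) F) (p : ℝ × ℝ) :
    fderiv ℝ (fun q => fderiv ℝ F q (1, 0)) p (0, 1)
      = fderiv ℝ (fun q => fderiv ℝ F q (0, 1)) p (1, 0) := by
  have hdF : ContDiff ℝ (⊤ : ℕ∞) (fderiv ℝ F) := hF.fderiv_right (by simp)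
  have hD2 : HasFDerivAt (fderiv ℝ F) (fderiv ℝ (fderiv ℝ F) p) p :=
    (hdF.differentiable (by simp) p).hasFDerivAt
  have e : ∀ v : ℝ × ℝ, HasFDerivAt (fun q => fderiv ℝ F q v)
      ((ContinuousLinearMap.apply ℝ E2 v).comp (fderiv ℝ (fderiv ℝ F) p)) p := fun v =>
    (ContinuousLinearMap.apply ℝ E2 v).hasFDerivAt.comp p hD2
  rw [(e (1, 0)).fderiv, (e (0, 1)).fderiv]
  have hsym := second_derivative_symmetric
    (fun y => (hF.differentiable (by simp) y).hasFDerivAt) hD2 (0, 1) (1, 0)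
  simpa using hsym

lemma curv_mul (g : ℝ → E2) (x : ℝ) (h : deriv g x ≠ 0) :
    curvature g x * ‖deriv g x‖ = -det2 (deriv (deriv g) x) (deriv g x) / ‖deriv g x‖ ^ 2 := by
  set v := deriv g x with hv
  set w := deriv (deriv g) x with hw
  have hn : ‖v‖ ≠ 0 := norm_ne_zero_iff.2 h
  have hip : ⟪w, normal g x⟫ = ‖v‖⁻¹ * (-det2 w v) := by
    simp only [normal, tangent, rot, det2, PiLp.inner_apply, RCLike.inner_apply,
      conj_trivial, Fin.sum_univ_two, WithLp.equiv_symm_apply, PiLp.toLp_apply, PiLp.smul_apply,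
      smul_eq_mul, Matrix.cons_val_zero, Matrix.cons_val_one, Matrix.head_cons, ← hv]
    ring
  rw [curvature, ← hv, ← hw, hip]
  field_simp

section main

variable (γ : ℝ → ℝ → E2)

/-- The curve as a function of both variables. -/
def GF : ℝ × ℝ → E2 := fun p => γ p.1 p.2
/-- `∂_x γ`. -/
def PX : ℝ × ℝ → E2 := fun p => fderiv ℝ (GF γ) p (1, 0)
/-- `∂_t γ`. -/
def PT : ℝ × ℝ → E2 := fun p => fderiv ℝ (GF γ) p (0, 1)
/-- `∂_x ∂_t γ`. -/
def QXT : ℝ × ℝ → E2 := fun p => fderiv ℝ (PT γ) p (1, 0)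
/-- The time derivative of `det2 (γ, γ_x)`. -/
def HH : ℝ × ℝ → ℝ := fun p => det2 (PT γ p) (PX γ p) + det2 (GF γ p) (QXT γ p)

variable {γ}

lemma hder_x (hγ : ContDiff ℝ (⊤ : ℕ∞) (GF γ)) (x t : ℝ) : HasDerivAt (fun y => γ y t) (PX γ (x, t)) x := keyx hγ x t

lemma hder_t (hγ : ContDiff ℝ (⊤ : ℕ∞) (GF γ)) (x t : ℝ) : HasDerivAt (fun s => γ x s) (PT γ (x, t)) t := keyt hγ x t

lemma hder_PXt (hγ : ContDiff ℝ (⊤ : ℕ∞) (GF γ)) (x t : ℝ) : HasDerivAt (fun s => PX γ (x, s)) (QXT γ (x, t)) t := by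
  have h := keyt (partial_contDiff hγ ((1 : ℝ), (0 : ℝ))) x t
  have := mixed_symm hγ (x, t)
  rw [this] at h
  exact h

lemma hder_PTx (hγ : ContDiff ℝ (⊤ : ℕ∞) (GF γ)) (x t : ℝ) : HasDerivAt (fun y => PT γ (y, t)) (QXT γ (x, t)) x :=
  keyx (partial_contDiff hγ ((0 : ℝ), (1 : ℝ))) x t

lemma contGF (hγ : ContDiff ℝ (⊤ : ℕ∞) (GF γ)) : Continuous (GF γ) := hγ.continuous
lemma contPX (hγ : ContDiff ℝ (⊤ : ℕ∞) (GF γ)) : Continuous (PX γ) := (partial_contDiff hγ _).continuous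
lemma contPT (hγ : ContDiff ℝ (⊤ : ℕ∞) (GF γ)) : Continuous (PT γ) := (partial_contDiff hγ _).continuous
lemma contQXT (hγ : ContDiff ℝ (⊤ : ℕ∞) (GF γ)) : Continuous (QXT γ) :=
  (partial_contDiff (partial_contDiff hγ ((0:ℝ),(1:ℝ))) _).continuous
lemma contHH (hγ : ContDiff ℝ (⊤ : ℕ∞) (GF γ)) : Continuous (HH γ) :=
  (continuous_det2 (contPT hγ) (contPX hγ)).add (continuous_det2 (contGF hγ) (contQXT hγ))

end main

/-- a smooth regular closed curve evolving by curvature, with total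
curvature `5π/3` at every time and positive enclosed area
`A(t) = ½∫₀¹ det(γ, γ_x) dx` on `[0,T)`, forces `T ≤ 3A(0)/(5π)`. -/
theorem maximal_time_bound (T : ℝ) (hT : 0 < T) (γ : ℝ → ℝ → E2)
    (hγ : ContDiff ℝ (⊤ : ℕ∞) fun p : ℝ × ℝ => γ p.1 p.2)
    (hreg : ∀ x ∈ Set.Icc (0:ℝ) 1, ∀ t ∈ Set.Ico (0:ℝ) T,
      deriv (fun y => γ y t) x ≠ 0)
    (hclosed : ∀ t ∈ Set.Ico (0:ℝ) T, γ 0 t = γ 1 t)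
    (hmotion : ∀ x ∈ Set.Icc (0:ℝ) 1, ∀ t ∈ Set.Ico (0:ℝ) T,
      deriv (fun s => γ x s) t
        = (‖deriv (fun y => γ y t) x‖ ^ 2)⁻¹ • deriv (deriv (fun y => γ y t)) x)
    (htot : ∀ t ∈ Set.Ico (0:ℝ) T,
      (∫ x in (0:ℝ)..1,
        curvature (fun y => γ y t) x * ‖deriv (fun y => γ y t) x‖)
        = 5 * Real.pi / 3)
    (A : ℝ → ℝ)
    (hA : ∀ t, A t = (1/2) * ∫ x in (0:ℝ)..1, det2 (γ x t) (deriv (fun y => γ y t) x))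
    (hApos : ∀ t ∈ Set.Ico (0:ℝ) T, 0 < A t) :
    T ≤ 3 * A 0 / (5 * Real.pi) := by
  have hγ' : ContDiff ℝ (⊤ : ℕ∞) (GF γ) := hγ
  have hx1 : ∀ (x s : ℝ), deriv (fun y => γ y s) x = PX γ (x, s) :=
    fun x s => (hder_x hγ' x s).deriv
  have ht1 : ∀ (x s : ℝ), deriv (fun u => γ x u) s = PT γ (x, s) :=
    fun x s => (hder_t hγ' x s).deriv
  have hAeq : ∀ s : ℝ, A s = (1/2) * ∫ x in (0:ℝ)..1, det2 (γ x s) (PX γ (x, s)) := by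
    intro s
    rw [hA s]
    congr 1
    simp only [hx1]
  -- interval integrability of the relevant continuous functions
  have contf : ∀ s : ℝ, Continuous fun x => det2 (γ x s) (PX γ (x, s)) := by
    intro s
    exact continuous_det2 ((contGF hγ').comp (continuous_id.prodMk continuous_const))
      ((contPX hγ').comp (continuous_id.prodMk continuous_const))
  have contHx : ∀ x : ℝ, Continuous fun s => HH γ (x, s) :=
    fun x => (contHH hγ').comp (continuous_const.prodMk continuous_id)
  have contHs : ∀ s : ℝ, Continuous fun x => HH γ (x, s) :=
    fun s => (contHH hγ').comp (continuous_id.prodMk continuous_const)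
  -- The key formula A t = A 0 - 5π/3 t on [0, T)
  have hform : ∀ t ∈ Set.Ico (0:ℝ) T, A t = A 0 - 5 * Real.pi / 3 * t := by
    intro t ht
    obtain ⟨ht0, htT⟩ := ht
    -- FTC in time for each x
    have ftct : ∀ x : ℝ, det2 (γ x t) (PX γ (x, t)) - det2 (γ x 0) (PX γ (x, 0))
        = ∫ s in (0:ℝ)..t, HH γ (x, s) := by
      intro x
      refine (intervalIntegral.integral_eq_sub_of_hasDerivAt
        (f := fun u => det2 (γ x u) (PX γ (x, u))) (f' := fun u => HH γ (x, u))
        (fun s _ => ?_) ((contHx x).intervalIntegrable 0 t)).symm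
      exact det2_hasDerivAt (hder_t hγ' x s) (hder_PXt hγ' x s)
    have key : A t - A 0
        = (1/2) * ∫ x in (0:ℝ)..1, ∫ s in (0:ℝ)..t, HH γ (x, s) := by
      rw [hAeq t, hAeq 0, ← mul_sub,
        ← intervalIntegral.integral_sub ((contf t).intervalIntegrable 0 1)
          ((contf 0).intervalIntegrable 0 1)]
      congr 1
      apply intervalIntegral.integral_congr
      intro x _
      exact ftct x
    -- Fubini
    have h01 : (0:ℝ) ≤ 1 := by norm_num
    have swap : (∫ x in (0:ℝ)..1, ∫ s in (0:ℝ)..t, HH γ (x, s))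
        = ∫ s in (0:ℝ)..t, ∫ x in (0:ℝ)..1, HH γ (x, s) := by
      rw [intervalIntegral.integral_of_le h01, intervalIntegral.integral_of_le ht0]
      simp_rw [intervalIntegral.integral_of_le ht0, intervalIntegral.integral_of_le h01]
      apply MeasureTheory.integral_integral_swap
      have hint : IntegrableOn (HH γ) (Icc 0 1 ×ˢ Icc 0 t) :=
        ((contHH hγ').continuousOn).integrableOn_compact (isCompact_Icc.prod isCompact_Icc)
      have hmono := hint.mono_set (Set.prod_mono Ioc_subset_Icc_self Ioc_subset_Icc_self)
      rw [Measure.prod_restrict]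
      exact hmono
    -- inner spatial integral
    have hinner : ∀ s ∈ Set.Ioc (0:ℝ) t,
        (∫ x in (0:ℝ)..1, HH γ (x, s)) = -(10 * Real.pi / 3) := by
      intro s hs
      have hsT : s ∈ Set.Ico (0:ℝ) T := ⟨hs.1.le, lt_of_le_of_lt hs.2 htT⟩
      have hsO : s ∈ Set.Ioo (0:ℝ) T := ⟨hs.1, hsT.2⟩
      have hb : PT γ (0, s) = PT γ (1, s) := by
        rw [← ht1 0 s, ← ht1 1 s]
        apply Filter.EventuallyEq.deriv_eq
        filter_upwards [Ioo_mem_nhds hsO.1 hsO.2] with u hu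
        exact hclosed u ⟨hu.1.le, hu.2⟩
      have contg2 : Continuous fun x =>
          det2 (PX γ (x, s)) (PT γ (x, s)) + det2 (γ x s) (QXT γ (x, s)) := by
        refine Continuous.add ?_ ?_
        · exact continuous_det2 ((contPX hγ').comp (continuous_id.prodMk continuous_const))
            ((contPT hγ').comp (continuous_id.prodMk continuous_const))
        · exact continuous_det2 ((contGF hγ').comp (continuous_id.prodMk continuous_const))
            ((contQXT hγ').comp (continuous_id.prodMk continuous_const))
      have hftc : (∫ x in (0:ℝ)..1,
          (det2 (PX γ (x, s)) (PT γ (x, s)) + det2 (γ x s) (QXT γ (x, s))))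
          = det2 (γ 1 s) (PT γ (1, s)) - det2 (γ 0 s) (PT γ (0, s)) := by
        refine intervalIntegral.integral_eq_sub_of_hasDerivAt
          (f := fun y => det2 (γ y s) (PT γ (y, s)))
          (f' := fun x => det2 (PX γ (x, s)) (PT γ (x, s)) + det2 (γ x s) (QXT γ (x, s)))
          (fun x _ => ?_) (contg2.intervalIntegrable 0 1)
        exact det2_hasDerivAt (hder_x hγ' x s) (hder_PTx hγ' x s)
      have hzero : (∫ x in (0:ℝ)..1,
          (det2 (PX γ (x, s)) (PT γ (x, s)) + det2 (γ x s) (QXT γ (x, s)))) = 0 := by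
        rw [hftc, hclosed s hsT, hb]
        ring
      have c1 : Continuous fun x => det2 (PT γ (x, s)) (PX γ (x, s)) :=
        continuous_det2 ((contPT hγ').comp (continuous_id.prodMk continuous_const))
          ((contPX hγ').comp (continuous_id.prodMk continuous_const))
      have c2 : Continuous fun x => det2 (γ x s) (QXT γ (x, s)) :=
        continuous_det2 ((contGF hγ').comp (continuous_id.prodMk continuous_const))
          ((contQXT hγ').comp (continuous_id.prodMk continuous_const))
      have c3 : Continuous fun x => det2 (PX γ (x, s)) (PT γ (x, s)) :=
        continuous_det2 ((contPX hγ').comp (continuous_id.prodMk continuous_const))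
          ((contPT hγ').comp (continuous_id.prodMk continuous_const))
      have hsplit : (∫ x in (0:ℝ)..1,
          (det2 (PX γ (x, s)) (PT γ (x, s)) + det2 (γ x s) (QXT γ (x, s))))
          = (∫ x in (0:ℝ)..1, det2 (PX γ (x, s)) (PT γ (x, s)))
            + ∫ x in (0:ℝ)..1, det2 (γ x s) (QXT γ (x, s)) :=
        intervalIntegral.integral_add (c3.intervalIntegrable 0 1) (c2.intervalIntegrable 0 1)
      have hanti : (∫ x in (0:ℝ)..1, det2 (PX γ (x, s)) (PT γ (x, s)))
          = -(∫ x in (0:ℝ)..1, det2 (PT γ (x, s)) (PX γ (x, s))) := by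
        rw [← intervalIntegral.integral_neg]
        apply intervalIntegral.integral_congr
        intro x _
        exact det2_swap _ _
      have hI2 : (∫ x in (0:ℝ)..1, det2 (γ x s) (QXT γ (x, s)))
          = ∫ x in (0:ℝ)..1, det2 (PT γ (x, s)) (PX γ (x, s)) := by
        have := hzero
        rw [hsplit, hanti] at this
        linarith
      have hHsplit : (∫ x in (0:ℝ)..1, HH γ (x, s))
          = (∫ x in (0:ℝ)..1, det2 (PT γ (x, s)) (PX γ (x, s)))
            + ∫ x in (0:ℝ)..1, det2 (γ x s) (QXT γ (x, s)) := by
        rw [← intervalIntegral.integral_add (c1.intervalIntegrable 0 1)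
          (c2.intervalIntegrable 0 1)]
        rfl
      have hcurv : (∫ x in (0:ℝ)..1, det2 (PT γ (x, s)) (PX γ (x, s)))
          = ∫ x in (0:ℝ)..1,
            -(curvature (fun y => γ y s) x * ‖deriv (fun y => γ y s) x‖) := by
        apply intervalIntegral.integral_congr
        intro x hx
        rw [Set.uIcc_of_le (by norm_num : (0:ℝ) ≤ 1)] at hx
        have hv : deriv (fun y => γ y s) x ≠ 0 := hreg x hx s hsT
        have hvn : ‖deriv (fun y => γ y s) x‖ ≠ 0 := norm_ne_zero_iff.2 hv
        have hm := hmotion x hx s hsT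
        rw [ht1 x s, hx1 x s] at hm
        show det2 (PT γ (x, s)) (PX γ (x, s))
          = -(curvature (fun y => γ y s) x * ‖deriv (fun y => γ y s) x‖)
        rw [hm, ← hx1 x s, det2_smul_left, curv_mul _ _ hv]
        field_simp
      have : (∫ x in (0:ℝ)..1,
            -(curvature (fun y => γ y s) x * ‖deriv (fun y => γ y s) x‖))
          = -(5 * Real.pi / 3) := by
        rw [intervalIntegral.integral_neg, htot s hsT]
      rw [hHsplit, hI2, hcurv, this]
      ring
    have hconst : (∫ s in (0:ℝ)..t, ∫ x in (0:ℝ)..1, HH γ (x, s))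
        = t * (-(10 * Real.pi / 3)) := by
      rw [intervalIntegral.integral_congr_ae (g := fun _ => -(10 * Real.pi / 3))
        (ae_of_all _ (fun s hs => hinner s (by rwa [Set.uIoc_of_le ht0] at hs)))]
      simp [intervalIntegral.integral_const]
      ring
    have := key
    rw [swap, hconst] at this
    have hπ := Real.pi_pos
    linarith
  -- conclude
  have hA0 : 0 < A 0 := hApos 0 ⟨le_refl 0, hT⟩
  have hπ := Real.pi_pos
  by_contra hcon
  push_neg at hcon
  set B := 3 * A 0 / (5 * Real.pi) with hB
  have hB0 : 0 < B := by positivity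
  have hBT : B ∈ Set.Ico (0:ℝ) T := ⟨hB0.le, hcon⟩
  have hAB := hApos B hBT
  rw [hform B hBT, hB] at hAB
  have : A 0 - 5 * Real.pi / 3 * (3 * A 0 / (5 * Real.pi)) = 0 := by
    field_simp
    ring
  linarith
end
end

section
/- Let T > 0, x₀, P ∈ ℝ² with d = |P − x₀|, let τ : [0,T) → ℝ² be continuous with |τ(ξ)| = 1 for all ξ, and let ρ_{x₀}(P,ξ) = exp(−d²/(4(T−ξ)))/√(4π(T−ξ)). Then for every t ∈ [0,T): |∫_t^T ⟨(P−x₀)/(2(T−ξ)), τ(ξ)⟩ ρ_{x₀}(P,ξ) dξ| ≤ (1/√(2π)) ∫_{d/√(2(T−t))}^{+∞} e^{−y²/2} dy ≤ 1/2. Moreover, lim_{t→T} ∫_t^T ⟨(P−x₀)/(2(T−ξ)), τ(ξ)⟩ ρ_{x₀}(P,ξ) dξ = 0. -/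
noncomputable section
open scoped RealInnerProductSpace
open MeasureTheory Filter Set

/-- The backward heat kernel relative to `(x₀, T)`. -/
def backHeat (x₀ : E2) (T : ℝ) (x : E2) (t : ℝ) : ℝ :=
  Real.exp (-‖x - x₀‖ ^ 2 / (4 * (T - t))) / Real.sqrt (4 * Real.pi * (T - t))

/-! By Cauchy–Schwarz and `‖τ‖ = 1`, the integrand is dominated by `d / (2 (T - ξ)) · ρ_{x₀}(P, ξ)`.
The substitution `T - ξ = d² / (2 y²)`, i.e. `y = d / √(2 (T - ξ))`, maps this majorant on `(t, T)`
exactly onto the standard Gaussian density on `(d / √(2 (T - t)), ∞)`, which carries at most half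
of the total mass. Since the majorant is integrable near `ξ = T`, its integral over `(t, T)` tends
to `0` as `t → T`, which gives the limit. -/

open Real Topology

lemma exp_neg_sq_div_two_eq : (fun y : ℝ => exp (-y ^ 2 / 2)) = fun y => exp (-(1 / 2) * y ^ 2) := by
  ext y; ring_nf

lemma integrable_exp_neg_sq_div_two : Integrable fun y : ℝ => exp (-y ^ 2 / 2) := by
  rw [exp_neg_sq_div_two_eq]
  exact integrable_exp_neg_mul_sq (by norm_num)

lemma integral_Ioi_zero_exp_neg_sq_div_two :
    ∫ y in Ioi 0, exp (-y ^ 2 / 2) = √(2 * π) / 2 := by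
  rw [exp_neg_sq_div_two_eq, integral_gaussian_Ioi, show π / (1 / 2) = 2 * π by ring]

lemma inv_sqrt_two_pi_mul_integral_Ioi_exp_neg_sq_div_two_le_half {a : ℝ} (ha : 0 ≤ a) :
    (√(2 * π))⁻¹ * ∫ y in Ioi a, exp (-y ^ 2 / 2) ≤ 1 / 2 := by
  have hmono : ∫ y in Ioi a, exp (-y ^ 2 / 2) ≤ ∫ y in Ioi 0, exp (-y ^ 2 / 2) :=
    setIntegral_mono_set integrable_exp_neg_sq_div_two.integrableOn
      (.of_forall fun y => (exp_pos _).le) (Ioi_subset_Ioi ha).eventuallyLE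
  have hpos : 0 < √(2 * π) := by positivity
  calc (√(2 * π))⁻¹ * ∫ y in Ioi a, exp (-y ^ 2 / 2)
      ≤ (√(2 * π))⁻¹ * (√(2 * π) / 2) := by
        rw [← integral_Ioi_zero_exp_neg_sq_div_two]; gcongr
    _ = 1 / 2 := by field_simp

/-- With `d = ‖P - x₀‖` and `s = T - ξ`, this is `d / (2 (T - ξ)) · ρ_{x₀}(P, ξ)`. -/
def boundaryWeight (d s : ℝ) : ℝ :=
  (2 * s)⁻¹ * d * (exp (-d ^ 2 / (4 * s)) / √(4 * π * s))

lemma abs_inner_smul_mul_backHeat_le {x₀ x v : E2} {T ξ : ℝ} (hξ : ξ ≤ T) (hv : ‖v‖ ≤ 1) :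
    |⟪(2 * (T - ξ))⁻¹ • (x - x₀), v⟫ * backHeat x₀ T x ξ|
      ≤ boundaryWeight ‖x - x₀‖ (T - ξ) := by
  have hc : 0 ≤ (2 * (T - ξ))⁻¹ := inv_nonneg.2 (by linarith)
  have hinner : |⟪(2 * (T - ξ))⁻¹ • (x - x₀), v⟫| ≤ (2 * (T - ξ))⁻¹ * ‖x - x₀‖ :=
    calc |⟪(2 * (T - ξ))⁻¹ • (x - x₀), v⟫| ≤ ‖(2 * (T - ξ))⁻¹ • (x - x₀)‖ * ‖v‖ :=
          abs_real_inner_le_norm _ _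
      _ ≤ ‖(2 * (T - ξ))⁻¹ • (x - x₀)‖ := mul_le_of_le_one_right (norm_nonneg _) hv
      _ = (2 * (T - ξ))⁻¹ * ‖x - x₀‖ := by rw [norm_smul, norm_of_nonneg hc]
  have hρ : 0 ≤ backHeat x₀ T x ξ := by unfold backHeat; positivity
  rw [abs_mul, abs_of_nonneg hρ, boundaryWeight]
  exact mul_le_mul_of_nonneg_right hinner hρ

lemma hasDerivAt_sq_div_two_mul_sq (d : ℝ) {y : ℝ} (hy : y ≠ 0) :
    HasDerivAt (fun y => d ^ 2 / (2 * y ^ 2)) (-(d ^ 2 / y ^ 3)) y := by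
  have h := (((hasDerivAt_pow 2 y).const_mul 2).inv (by positivity)).const_mul (d ^ 2)
  refine (h.congr_deriv ?_).congr_of_eventuallyEq (.of_forall fun z => ?_)
  · norm_num
    field_simp
  · simp [div_eq_mul_inv]

lemma strictAntiOn_sq_div_two_mul_sq {d : ℝ} (hd : d ≠ 0) :
    StrictAntiOn (fun y => d ^ 2 / (2 * y ^ 2)) (Ioi 0) := by
  intro y (hy : 0 < y) z _ hyz
  exact div_lt_div_of_pos_left (by positivity) (by positivity) (by gcongr)

lemma image_sq_div_two_mul_sq_Ioi {d σ : ℝ} (hd : 0 < d) (hσ : 0 < σ) :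
    (fun y => d ^ 2 / (2 * y ^ 2)) '' Ioi (d / √(2 * σ)) = Ioo 0 σ := by
  have h2σ : 0 < 2 * σ := by positivity
  ext s
  simp only [mem_image, mem_Ioi, mem_Ioo]
  constructor
  · rintro ⟨y, hy, rfl⟩
    have hy0 : 0 < y := (by positivity : 0 < d / √(2 * σ)).trans hy
    refine ⟨by positivity, ?_⟩
    rw [div_lt_iff₀ (by positivity)]
    rw [div_lt_iff₀ (by positivity)] at hy
    have := pow_lt_pow_left₀ hy (by positivity) two_ne_zero
    rw [mul_pow, sq_sqrt h2σ.le] at this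
    linarith
  · rintro ⟨hs, hsσ⟩
    refine ⟨d / √(2 * s), ?_, ?_⟩
    · gcongr
    · rw [div_pow, sq_sqrt (by positivity)]
      field_simp

lemma abs_neg_div_pow_three_mul_boundaryWeight {d y : ℝ} (hd : 0 < d) (hy : 0 < y) :
    |-(d ^ 2 / y ^ 3)| * boundaryWeight d (d ^ 2 / (2 * y ^ 2))
      = (√(2 * π))⁻¹ * exp (-y ^ 2 / 2) := by
  have hexp : -d ^ 2 / (4 * (d ^ 2 / (2 * y ^ 2))) = -y ^ 2 / 2 := by
    field_simp; ring
  have hsqrt : √(4 * π * (d ^ 2 / (2 * y ^ 2))) = √(2 * π) * (d / y) := by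
    rw [show 4 * π * (d ^ 2 / (2 * y ^ 2)) = 2 * π * (d / y) ^ 2 by field_simp; ring,
      sqrt_mul (by positivity), sqrt_sq (by positivity)]
  rw [abs_neg, abs_of_pos (by positivity), boundaryWeight, hexp, hsqrt]
  field_simp

section ChangeOfVariables

variable {d σ : ℝ}

lemma hasDerivWithinAt_sq_div_two_mul_sq_Ioi (hd : 0 < d) :
    ∀ y ∈ Ioi (d / √(2 * σ)),
      HasDerivWithinAt (fun y => d ^ 2 / (2 * y ^ 2)) (-(d ^ 2 / y ^ 3)) (Ioi (d / √(2 * σ))) y :=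
  fun _ hy => (hasDerivAt_sq_div_two_mul_sq d
    ((div_nonneg hd.le (sqrt_nonneg _)).trans_lt hy).ne').hasDerivWithinAt

lemma injOn_sq_div_two_mul_sq_Ioi (hd : 0 < d) :
    InjOn (fun y => d ^ 2 / (2 * y ^ 2)) (Ioi (d / √(2 * σ))) :=
  (strictAntiOn_sq_div_two_mul_sq hd.ne').injOn.mono
    (Ioi_subset_Ioi (div_nonneg hd.le (sqrt_nonneg _)))

lemma eqOn_abs_neg_div_pow_three_mul_boundaryWeight (hd : 0 < d) :
    EqOn (fun y => |-(d ^ 2 / y ^ 3)| • boundaryWeight d (d ^ 2 / (2 * y ^ 2)))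
      (fun y => (√(2 * π))⁻¹ * exp (-y ^ 2 / 2)) (Ioi (d / √(2 * σ))) := fun _ hy =>
  abs_neg_div_pow_three_mul_boundaryWeight hd
    ((div_nonneg hd.le (sqrt_nonneg _)).trans_lt hy)

lemma integrableOn_boundaryWeight_Ioo (hd : 0 < d) (hσ : 0 < σ) :
    IntegrableOn (boundaryWeight d) (Ioo 0 σ) := by
  rw [← image_sq_div_two_mul_sq_Ioi hd hσ, integrableOn_image_iff_integrableOn_abs_deriv_smul
    measurableSet_Ioi (hasDerivWithinAt_sq_div_two_mul_sq_Ioi hd) (injOn_sq_div_two_mul_sq_Ioi hd),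
    integrableOn_congr_fun (eqOn_abs_neg_div_pow_three_mul_boundaryWeight hd) measurableSet_Ioi]
  exact (integrable_exp_neg_sq_div_two.const_mul _).integrableOn

lemma integral_boundaryWeight_Ioo (hd : 0 < d) (hσ : 0 < σ) :
    ∫ s in Ioo 0 σ, boundaryWeight d s
      = (√(2 * π))⁻¹ * ∫ y in Ioi (d / √(2 * σ)), exp (-y ^ 2 / 2) := by
  rw [← image_sq_div_two_mul_sq_Ioi hd hσ, integral_image_eq_integral_abs_deriv_smul
    measurableSet_Ioi (hasDerivWithinAt_sq_div_two_mul_sq_Ioi hd) (injOn_sq_div_two_mul_sq_Ioi hd),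
    setIntegral_congr_fun measurableSet_Ioi (eqOn_abs_neg_div_pow_three_mul_boundaryWeight hd),
    integral_const_mul]

end ChangeOfVariables

lemma boundaryWeight_zero_left : boundaryWeight 0 = 0 := by
  ext s
  simp [boundaryWeight]

lemma intervalIntegrable_boundaryWeight {d σ : ℝ} (hd : 0 ≤ d) (hσ : 0 < σ) :
    IntervalIntegrable (boundaryWeight d) volume 0 σ := by
  rcases hd.eq_or_lt with rfl | hd
  · rw [boundaryWeight_zero_left]
    exact intervalIntegrable_const
  · exact (intervalIntegrable_iff_integrableOn_Ioo_of_le hσ.le).2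
      (integrableOn_boundaryWeight_Ioo hd hσ)

lemma integral_boundaryWeight_le {d σ : ℝ} (hd : 0 ≤ d) (hσ : 0 < σ) :
    ∫ s in 0..σ, boundaryWeight d s
      ≤ (√(2 * π))⁻¹ * ∫ y in Ioi (d / √(2 * σ)), exp (-y ^ 2 / 2) := by
  rcases hd.eq_or_lt with rfl | hd
  · simp only [boundaryWeight_zero_left, Pi.zero_apply, intervalIntegral.integral_zero]
    exact mul_nonneg (by positivity)
      (setIntegral_nonneg measurableSet_Ioi fun y _ => (exp_pos _).le)
  · rw [intervalIntegral.integral_of_le hσ.le, integral_Ioc_eq_integral_Ioo,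
      integral_boundaryWeight_Ioo hd hσ]

lemma tendsto_integral_boundaryWeight_nhdsGT_zero {d : ℝ} (hd : 0 ≤ d) :
    Tendsto (fun σ => ∫ s in 0..σ, boundaryWeight d s) (𝓝[>] 0) (𝓝 0) := by
  have hcont := intervalIntegral.continuousOn_primitive_interval'
    (intervalIntegrable_boundaryWeight hd one_pos) left_mem_uIcc
  have h := (hcont 0 left_mem_uIcc).mono_of_mem_nhdsWithin
    (by rw [uIcc_of_le zero_le_one]; exact Icc_mem_nhdsGT one_pos)
  simpa only [ContinuousWithinAt, intervalIntegral.integral_same] using h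

lemma abs_integral_inner_smul_mul_backHeat_le {x₀ x : E2} {τ : ℝ → E2} {t T : ℝ} (htT : t < T)
    (hτ : ∀ ξ ∈ Ico t T, ‖τ ξ‖ ≤ 1) :
    |∫ ξ in t..T, ⟪(2 * (T - ξ))⁻¹ • (x - x₀), τ ξ⟫ * backHeat x₀ T x ξ|
      ≤ ∫ s in 0..(T - t), boundaryWeight ‖x - x₀‖ s := by
  have hint := (intervalIntegrable_boundaryWeight (norm_nonneg (x - x₀))
    (sub_pos.2 htT)).comp_sub_left T
  rw [sub_zero, sub_sub_cancel] at hint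
  have h := intervalIntegral.norm_integral_le_of_norm_le htT.le
    (f := fun ξ => ⟪(2 * (T - ξ))⁻¹ • (x - x₀), τ ξ⟫ * backHeat x₀ T x ξ) ?_ hint.symm
  · simpa only [intervalIntegral.integral_comp_sub_left, sub_self, norm_eq_abs] using h
  filter_upwards [Measure.ae_ne volume T] with ξ hξT hξ
  exact abs_inner_smul_mul_backHeat_le hξ.2 (hτ ξ ⟨hξ.1.le, hξ.2.lt_of_ne hξT⟩)

lemma tendsto_sub_nhdsLT_nhdsGT_zero (T : ℝ) : Tendsto (fun t => T - t) (𝓝[<] T) (𝓝[>] 0) :=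
  tendsto_nhdsWithin_of_tendsto_nhds_of_eventually_within _
    (by simpa using ((continuous_sub_left T).tendsto T).mono_left nhdsWithin_le_nhds)
    (eventually_nhdsWithin_of_forall fun _ ht => mem_Ioi.2 (sub_pos.2 ht))

theorem boundary_term_estimate_general (T : ℝ) (hT : 0 < T) (x₀ P : E2) (d : ℝ)
    (hd : d = ‖P - x₀‖) (τ : ℝ → E2)
    (hτ : ∀ ξ ∈ Set.Ico (0:ℝ) T, ‖τ ξ‖ = 1) :
    (∀ t ∈ Set.Ico (0:ℝ) T,
      |∫ ξ in t..T, ⟪(2 * (T - ξ))⁻¹ • (P - x₀), τ ξ⟫ * backHeat x₀ T P ξ|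
        ≤ (Real.sqrt (2 * Real.pi))⁻¹
          * ∫ y in Set.Ioi (d / Real.sqrt (2 * (T - t))), Real.exp (-y ^ 2 / 2)
      ∧ (Real.sqrt (2 * Real.pi))⁻¹
          * (∫ y in Set.Ioi (d / Real.sqrt (2 * (T - t))), Real.exp (-y ^ 2 / 2))
        ≤ 1 / 2)
    ∧ Filter.Tendsto
        (fun t => ∫ ξ in t..T, ⟪(2 * (T - ξ))⁻¹ • (P - x₀), τ ξ⟫ * backHeat x₀ T P ξ)
        (nhdsWithin T (Set.Iio T)) (nhds 0) := by
  subst hd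
  have hbound : ∀ t ∈ Ico 0 T,
      |∫ ξ in t..T, ⟪(2 * (T - ξ))⁻¹ • (P - x₀), τ ξ⟫ * backHeat x₀ T P ξ|
        ≤ ∫ s in 0..(T - t), boundaryWeight ‖P - x₀‖ s := fun t ht =>
    abs_integral_inner_smul_mul_backHeat_le ht.2 fun ξ hξ => (hτ ξ ⟨ht.1.trans hξ.1, hξ.2⟩).le
  refine ⟨fun t ht => ⟨(hbound t ht).trans ?_, ?_⟩, ?_⟩
  · exact integral_boundaryWeight_le (norm_nonneg _) (sub_pos.2 ht.2)
  · exact inv_sqrt_two_pi_mul_integral_Ioi_exp_neg_sq_div_two_le_half (by positivity)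
  · refine squeeze_zero_norm' ?_ ((tendsto_integral_boundaryWeight_nhdsGT_zero
      (norm_nonneg (P - x₀))).comp (tendsto_sub_nhdsLT_nhdsGT_zero T))
    filter_upwards [Ioo_mem_nhdsLT hT] with t ht
    exact hbound t (Ioo_subset_Ico_self ht)

/-- the boundary term of the monotonicity formula satisfies
`|∫_t^T ⟨(P−x₀)/(2(T−ξ)), τ(ξ)⟩ ρ_{x₀}(P,ξ) dξ| ≤ (1/√(2π)) ∫_{d/√(2(T−t))}^∞ e^{−y²/2} dy ≤ 1/2`
and tends to `0` as `t → T`. -/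
theorem boundary_term_estimate (T : ℝ) (hT : 0 < T) (x₀ P : E2) (d : ℝ)
    (hd : d = ‖P - x₀‖) (τ : ℝ → E2)
    (hτc : ContinuousOn τ (Set.Ico (0:ℝ) T))
    (hτ : ∀ ξ ∈ Set.Ico (0:ℝ) T, ‖τ ξ‖ = 1) :
    (∀ t ∈ Set.Ico (0:ℝ) T,
      |∫ ξ in t..T, ⟪(2 * (T - ξ))⁻¹ • (P - x₀), τ ξ⟫ * backHeat x₀ T P ξ|
        ≤ (Real.sqrt (2 * Real.pi))⁻¹
          * ∫ y in Set.Ioi (d / Real.sqrt (2 * (T - t))), Real.exp (-y ^ 2 / 2)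
      ∧ (Real.sqrt (2 * Real.pi))⁻¹
          * (∫ y in Set.Ioi (d / Real.sqrt (2 * (T - t))), Real.exp (-y ^ 2 / 2))
        ≤ 1 / 2)
    ∧ Filter.Tendsto
        (fun t => ∫ ξ in t..T, ⟪(2 * (T - ξ))⁻¹ • (P - x₀), τ ξ⟫ * backHeat x₀ T P ξ)
        (nhdsWithin T (Set.Iio T)) (nhds 0) :=
  boundary_term_estimate_general T hT x₀ P d hd τ hτ
end
end
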